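/- Let H > 1 and t₀ ≥ 4H be real numbers, set α_l = H/(l + t₀) for integers l ≥ 0, and define β̃_{h,t} = α_h ∏_{l=h+1}^{t}(1 − α_l) (empty product equal to 1). Then for every integer t ≥ 1: ∑_{h=1}^{t} β̃_{h,t}² ≤ 2H/(t + 1 + t₀). -/

import Mathlib

/-!
Writing `S_t = ∑_{h=1}^t β̃_{h,t}²`, every weight with `h ≤ t` picks up the factor `1 - α_{t+1}` when
`t` grows, and one new weight `β̃_{t+1,t+1} = α_{t+1}` appears, so `S_{t+1} = (1 - α_{t+1})² S_t + α_{t+1}²`.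
Starting from `S_0 = 0`, induction then only needs the one-step inequality
`(1 - H/x)² · 2H/x + (H/x)² ≤ 2H/(x+1)` for `x = t + 1 + t₀ ≥ 4H`, which holds once `H ≥ 1`.
-/

open Finset

/-- The paper's `β̃_{h,t}`, for step sizes `α`. -/
def recursionWeight (α : ℕ → ℝ) (h t : ℕ) : ℝ :=
  α h * ∏ l ∈ Icc (h + 1) t, (1 - α l)

section recursionWeight

variable (α : ℕ → ℝ)

theorem recursionWeight_self (t : ℕ) : recursionWeight α t t = α t := by
  simp [recursionWeight]

theorem recursionWeight_succ {h t : ℕ} (hht : h ≤ t) :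
    recursionWeight α h (t + 1) = recursionWeight α h t * (1 - α (t + 1)) := by
  rw [recursionWeight, recursionWeight, prod_Icc_succ_top (by omega), mul_assoc]

theorem sum_sq_recursionWeight_succ (t : ℕ) :
    ∑ h ∈ Icc 1 (t + 1), recursionWeight α h (t + 1) ^ 2 =
      (1 - α (t + 1)) ^ 2 * ∑ h ∈ Icc 1 t, recursionWeight α h t ^ 2 + α (t + 1) ^ 2 := by
  rw [sum_Icc_succ_top (by omega), recursionWeight_self, mul_sum]
  congr 1
  refine sum_congr rfl fun h hh => ?_
  rw [recursionWeight_succ α (mem_Icc.mp hh).2]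
  ring

end recursionWeight

theorem sq_one_sub_div_mul_two_mul_div_add_sq_div_le {H x : ℝ} (hH : 1 ≤ H) (hx : 4 * H ≤ x) :
    (1 - H / x) ^ 2 * (2 * H / x) + (H / x) ^ 2 ≤ 2 * H / (x + 1) := by
  have hx0 : 0 < x := by linarith
  have key : 2 * H * (x - H) ^ 2 * (x + 1) + H ^ 2 * x * (x + 1) ≤ 2 * H * x ^ 3 := by
    nlinarith [mul_nonneg (mul_nonneg (sub_nonneg.mpr hx) hx0.le) (by linarith : (0 : ℝ) ≤ H),
      mul_nonneg (sub_nonneg.mpr hH) (sq_nonneg x), mul_pos hx0 (by linarith : (0 : ℝ) < H)]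
  have expand : (1 - H / x) ^ 2 * (2 * H / x) + (H / x) ^ 2 =
      (2 * H * (x - H) ^ 2 + H ^ 2 * x) / x ^ 3 := by
    field_simp
  rw [expand, div_le_div_iff₀ (by positivity) (by linarith)]
  linarith

theorem sum_sq_recursionWeight_le {H t₀ : ℝ} (hH : 1 ≤ H) (ht₀ : 4 * H ≤ t₀) (t : ℕ) :
    ∑ h ∈ Icc 1 t, recursionWeight (fun l => H / (l + t₀)) h t ^ 2 ≤ 2 * H / (t + 1 + t₀) := by
  induction t with
  | zero =>
    rw [Icc_eq_empty (by omega), sum_empty]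
    exact div_nonneg (by linarith) (by push_cast; linarith)
  | succ t ih =>
    have hx : 4 * H ≤ (t : ℝ) + 1 + t₀ := by linarith [(t.cast_nonneg : (0 : ℝ) ≤ t)]
    rw [sum_sq_recursionWeight_succ]
    push_cast
    calc _ ≤ (1 - H / ((t : ℝ) + 1 + t₀)) ^ 2 * (2 * H / ((t : ℝ) + 1 + t₀))
            + (H / ((t : ℝ) + 1 + t₀)) ^ 2 := by gcongr
      _ ≤ 2 * H / ((t : ℝ) + 1 + t₀ + 1) := sq_one_sub_div_mul_two_mul_div_add_sq_div_le hH hx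
      _ = 2 * H / ((t : ℝ) + 1 + 1 + t₀) := by ring_nf

/-- Lemma 2, part 2: sum-of-squares bound on the recursion weights
`β̃_{h,t} = α_h ∏_{l=h+1}^{t} (1 - α_l)` with step sizes `α_l = H / (l + t₀)`. -/
theorem stmt_6 (H t₀ : ℝ) (hH : 1 < H) (ht₀ : 4 * H ≤ t₀) :
    ∀ t : ℕ, 1 ≤ t →
      ∑ h ∈ Finset.Icc 1 t,
          ((H / ((h : ℝ) + t₀)) * ∏ l ∈ Finset.Icc (h + 1) t, (1 - H / ((l : ℝ) + t₀))) ^ 2 ≤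
        2 * H / ((t : ℝ) + 1 + t₀) :=
  fun t _ => sum_sq_recursionWeight_le hH.le ht₀ t
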